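/- arXiv:1611.07260 — 3 statements merged into one kernel-verified Lean document; each statement's English description precedes it below -/
import Mathlib

section
/- For every admissible finite set L ⊆ ℕ ∪ {0}, there exists a tree R on at most 7 vertices and a vertex v of R such that L(v) ∩ {0,1,2} = L ∩ {0,1,2}, and 3 ∈ L(v) if and only if L \ {0,1,2} is nonempty. -/
/-- The leaf distance set of the vertex `v` in the graph `G`: the set of distances from
`v` to the leaves (vertices of degree at most 1) of `G`. -/
def leafDistSet {V : Type} (G : SimpleGraph V) (v : V) : Set ℕ :=
  {d : ℕ | ∃ u : V, Nat.card (G.neighborSet u) ≤ 1 ∧ G.dist v u = d}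

/-- A set `L ⊆ ℕ ∪ {0}` is admissible if it is the leaf distance set of some vertex of
some finite tree. -/
def Admissible (L : Set ℕ) : Prop :=
  ∃ (V : Type) (_ : Fintype V) (G : SimpleGraph V) (v : V),
    G.IsTree ∧ L = leafDistSet G v

/-!
Capping distances at 3 reduces the claim to the set `T = min(L, 3) ⊆ {0, 1, 2, 3}`. Such a set
satisfies two constraints: it is nonempty, since a finite tree has a leaf, and if `0, 1 ∈ L`
then `v` is a leaf whose neighbour is a leaf, so the tree is a single edge and `T = {0, 1}`.
Each of the twelve subsets of `{0, 1, 2, 3}` meeting these constraints is the leaf distance set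
of a vertex of an explicit tree on at most 7 vertices (essentially a spider with one leg of each
length in `T`), which is checked by computation.
-/

open SimpleGraph Finset

namespace SimpleGraph

variable {V : Type*} (G : SimpleGraph V)

def ReachableWithin : ℕ → V → V → Prop
  | 0, a, b => a = b
  | n + 1, a, b => a = b ∨ ∃ x, G.Adj a x ∧ ReachableWithin n x b

instance decidableReachableWithin [Fintype V] [DecidableEq V] [DecidableRel G.Adj] :
    ∀ n, DecidableRel (G.ReachableWithin n)
  | 0 => fun a b => inferInstanceAs (Decidable (a = b))
  | n + 1 => fun a b =>
    haveI := decidableReachableWithin n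
    inferInstanceAs (Decidable (a = b ∨ ∃ x, G.Adj a x ∧ G.ReachableWithin n x b))

variable {G} {n : ℕ} {a b : V}

theorem reachableWithin_iff_exists_walk :
    G.ReachableWithin n a b ↔ ∃ p : G.Walk a b, p.length ≤ n := by
  induction n generalizing a with
  | zero =>
    refine ⟨by rintro rfl; exact ⟨Walk.nil, le_rfl⟩, fun ⟨p, hp⟩ => ?_⟩
    exact Walk.eq_of_length_eq_zero (Nat.le_zero.1 hp)
  | succ n ih =>
    simp only [ReachableWithin, ih]
    constructor
    · rintro (rfl | ⟨x, hx, p, hp⟩)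
      · exact ⟨Walk.nil, Nat.zero_le _⟩
      · exact ⟨Walk.cons hx p, by simpa using hp⟩
    · rintro ⟨_ | ⟨hx, p⟩, hp⟩
      · exact Or.inl rfl
      · exact Or.inr ⟨_, hx, p, by simpa using hp⟩

theorem Reachable.dist_le_iff_reachableWithin (h : G.Reachable a b) :
    G.dist a b ≤ n ↔ G.ReachableWithin n a b := by
  obtain ⟨p, hp⟩ := h.exists_walk_length_eq_dist
  rw [reachableWithin_iff_exists_walk]
  exact ⟨fun hn => ⟨p, hp ▸ hn⟩, fun ⟨q, hq⟩ => (dist_le q).trans hq⟩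

theorem Reachable.dist_eq_iff_reachableWithin (h : G.Reachable a b) {d : ℕ} :
    G.dist a b = d ↔ G.ReachableWithin d a b ∧ ∀ k < d, ¬G.ReachableWithin k a b := by
  simp only [← h.dist_le_iff_reachableWithin, not_le]
  refine ⟨by rintro rfl; exact ⟨le_rfl, fun _ => id⟩, fun ⟨hle, hlt⟩ => ?_⟩
  exact le_antisymm hle (not_lt.1 fun hd => lt_irrefl _ (hlt _ hd))

theorem connected_of_forall_reachableWithin (v : V) (h : ∀ b, G.ReachableWithin n v b) :
    G.Connected := by
  refine (connected_iff_exists_forall_reachable G).2 ⟨v, fun b => ?_⟩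
  obtain ⟨p, -⟩ := reachableWithin_iff_exists_walk.1 (h b)
  exact ⟨p⟩

theorem Connected.dist_lt_card [Fintype V] (hG : G.Connected) (a b : V) :
    G.dist a b < Fintype.card V := by
  obtain ⟨p, hp, hlen⟩ := hG.exists_path_of_dist a b
  exact hlen ▸ hp.length_lt

theorem isTree_of_connected_of_sum_degrees [Fintype V] [DecidableRel G.Adj] (hG : G.Connected)
    (hdeg : ∑ v, G.degree v + 2 = 2 * Fintype.card V) : G.IsTree := by
  rw [isTree_iff_connected_and_card, Nat.card_eq_fintype_card, Nat.card_eq_fintype_card,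
    ← edgeFinset_card]
  have := G.sum_degrees_eq_twice_card_edges
  exact ⟨hG, by omega⟩

end SimpleGraph

section LeafDistSet

variable {V : Type} {G : SimpleGraph V}

theorem leafDistSet_eq_setOf_degree_le_one [Fintype V] [DecidableRel G.Adj] (v : V) :
    leafDistSet G v = {d | ∃ u, G.degree u ≤ 1 ∧ G.dist v u = d} := by
  simp only [leafDistSet, Nat.card_eq_fintype_card, card_neighborSet_eq_degree]

theorem SimpleGraph.IsTree.leafDistSet_nonempty [Finite V] (hG : G.IsTree) (v : V) :
    (leafDistSet G v).Nonempty := by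
  classical
  have := Fintype.ofFinite V
  rcases subsingleton_or_nontrivial V with hV | hV
  · exact ⟨_, v, Finite.card_le_one_iff_subsingleton.2 inferInstance, rfl⟩
  · obtain ⟨u, hu⟩ := hG.exists_vert_degree_one_of_nontrivial
    rw [leafDistSet_eq_setOf_degree_le_one]
    exact ⟨_, u, hu.le, rfl⟩

/-- `0, 1 ∈ L(v)` says that `v` is a leaf adjacent to a leaf, and these two vertices then form a
whole component. -/
theorem SimpleGraph.Connected.leafDistSet_subset_of_zero_mem_of_one_mem [Finite V]
    (hG : G.Connected) {v : V} (h0 : 0 ∈ leafDistSet G v) (h1 : 1 ∈ leafDistSet G v) :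
    leafDistSet G v ⊆ {0, 1} := by
  obtain ⟨v', hv, hv'⟩ := h0
  obtain ⟨u, hu, hvu⟩ := h1
  obtain rfl : v = v' := hG.dist_eq_zero_iff.1 hv'
  have hadj : G.Adj v u := dist_eq_one_iff_adj.1 hvu
  rw [Finite.card_le_one_iff_subsingleton, Set.subsingleton_coe] at hv hu
  have closed : ∀ x y, G.Adj x y → (x = v ∨ x = u) → (y = v ∨ y = u) := by
    rintro x y hxy (rfl | rfl)
    · exact Or.inr (hv hxy hadj)
    · exact Or.inl (hu hxy hadj.symm)
  have mem_pair : ∀ x y (_ : G.Walk x y), (x = v ∨ x = u) → (y = v ∨ y = u) := by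
    intro x y p
    induction p with
    | nil => exact id
    | cons hxy _ ih => exact fun hx => ih (closed _ _ hxy hx)
  rintro d ⟨w, -, rfl⟩
  obtain ⟨p⟩ := hG v w
  rcases mem_pair v w p (Or.inl rfl) with rfl | rfl
  · exact Or.inl dist_self
  · exact Or.inr hvu

namespace SimpleGraph

variable (G) [Fintype V] [DecidableEq V] [DecidableRel G.Adj]

def leafDistFinset (v : V) : Finset ℕ :=
  (range (Fintype.card V)).filter fun d =>
    ∃ u, G.degree u ≤ 1 ∧ G.ReachableWithin d v u ∧ ∀ k < d, ¬G.ReachableWithin k v u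

variable {G}

theorem Connected.coe_leafDistFinset (hG : G.Connected) (v : V) :
    (G.leafDistFinset v : Set ℕ) = leafDistSet G v := by
  ext d
  have hdist : ∀ u, (G.ReachableWithin d v u ∧ ∀ k < d, ¬G.ReachableWithin k v u) ↔
      G.dist v u = d := fun u => (hG v u).dist_eq_iff_reachableWithin.symm
  simp only [leafDistFinset, coe_filter, mem_range, leafDistSet_eq_setOf_degree_le_one, hdist,
    Set.mem_ofPred_eq]
  refine ⟨fun ⟨_, h⟩ => h, ?_⟩
  rintro ⟨u, hu, rfl⟩
  exact ⟨hG.dist_lt_card v u, u, hu, rfl⟩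

end SimpleGraph

end LeafDistSet

section SmallTrees

def treeOf (edges : List (ℕ × ℕ)) : SimpleGraph (Fin (edges.length + 1)) :=
  fromRel fun a b => (a.val, b.val) ∈ edges

instance (edges : List (ℕ × ℕ)) : DecidableRel (treeOf edges).Adj := by
  unfold treeOf; infer_instance

/-- `treeOf edges` has one more vertex than `edges` has entries, so connectivity together with
the degree sum `2 * edges.length` makes it a tree. -/
def IsSmallTreeWithLeafDists (edges : List (ℕ × ℕ)) (S : Finset ℕ) : Prop :=
  edges.length ≤ 6 ∧ (∀ b, (treeOf edges).ReachableWithin edges.length 0 b) ∧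
    ∑ v, (treeOf edges).degree v = 2 * edges.length ∧ (treeOf edges).leafDistFinset 0 = S

instance (edges : List (ℕ × ℕ)) (S : Finset ℕ) :
    Decidable (IsSmallTreeWithLeafDists edges S) := by
  unfold IsSmallTreeWithLeafDists; infer_instance

def smallTrees : List (Finset ℕ × List (ℕ × ℕ)) :=
  [({0}, []),
   ({0, 1}, [(0, 1)]),
   ({0, 2}, [(0, 1), (1, 2)]),
   ({0, 3}, [(0, 1), (1, 2), (2, 3)]),
   ({0, 2, 3}, [(0, 1), (1, 2), (1, 3), (3, 4)]),
   ({1}, [(0, 1), (0, 2)]),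
   ({2}, [(0, 1), (1, 2), (0, 3), (3, 4)]),
   ({3}, [(0, 1), (1, 2), (2, 3), (0, 4), (4, 5), (5, 6)]),
   ({1, 2}, [(0, 1), (0, 2), (2, 3)]),
   ({1, 3}, [(0, 1), (0, 2), (2, 3), (3, 4)]),
   ({2, 3}, [(0, 1), (1, 2), (0, 3), (3, 4), (4, 5)]),
   ({1, 2, 3}, [(0, 1), (0, 2), (2, 3), (0, 4), (4, 5), (5, 6)])]

theorem isSmallTreeWithLeafDists_of_mem_smallTrees :
    ∀ t ∈ smallTrees, IsSmallTreeWithLeafDists t.2 t.1 := by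
  decide

theorem exists_mem_smallTrees_fst_eq :
    ∀ S ∈ (range 4).powerset, S.Nonempty → (0 ∈ S → 1 ∈ S → S ⊆ {0, 1}) →
      ∃ t ∈ smallTrees, t.1 = S := by
  decide

theorem exists_small_tree_leafDistSet_eq {T : Set ℕ} (hT : T ⊆ Set.Iic 3) (hne : T.Nonempty)
    (h01 : 0 ∈ T → 1 ∈ T → T ⊆ {0, 1}) :
    ∃ (V : Type) (_ : Fintype V) (R : SimpleGraph V) (v : V),
      R.IsTree ∧ Nat.card V ≤ 7 ∧ leafDistSet R v = T := by
  obtain ⟨S, rfl⟩ := ((Set.finite_Iic 3).subset hT).exists_finset_coe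
  have hS : S ∈ (range 4).powerset := mem_powerset.2 fun d hd => by
    simpa [Nat.lt_succ_iff] using hT hd
  obtain ⟨⟨S, edges⟩, ht, rfl⟩ :=
    exists_mem_smallTrees_fst_eq S hS (by exact_mod_cast hne)
      fun h0 h1 => by simpa [← coe_subset] using h01 h0 h1
  obtain ⟨hlen, hreach, hdeg, hleaf⟩ : IsSmallTreeWithLeafDists edges S :=
    isSmallTreeWithLeafDists_of_mem_smallTrees _ ht
  have hconn := connected_of_forall_reachableWithin 0 hreach
  refine ⟨_, inferInstance, treeOf edges, 0, ?_, ?_, ?_⟩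
  · exact isTree_of_connected_of_sum_degrees hconn (by rw [hdeg, Fintype.card_fin]; ring)
  · simp only [Nat.card_eq_fintype_card, Fintype.card_fin]; omega
  · rw [← hconn.coe_leafDistFinset, hleaf]

end SmallTrees

namespace Set

variable (L : Set ℕ) (n : ℕ)

theorem image_min_subset_Iic : (min · n) '' L ⊆ Iic n := by
  rintro _ ⟨x, -, rfl⟩
  exact min_le_right x n

variable {L n}

theorem mem_image_min_iff_of_lt {d : ℕ} (hd : d < n) : d ∈ (min · n) '' L ↔ d ∈ L := by
  refine ⟨fun ⟨x, hx, hxd⟩ => ?_, fun h => ⟨d, h, min_eq_left hd.le⟩⟩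
  obtain rfl : x = d := by simp only at hxd; omega
  exact hx

variable (L n)

theorem image_min_inter_Iio : (min · n) '' L ∩ Iio n = L ∩ Iio n := by
  ext d
  exact and_congr_left mem_image_min_iff_of_lt

theorem mem_image_min_iff : n ∈ (min · n) '' L ↔ (L \ Iio n).Nonempty := by
  simp only [mem_image, min_eq_right_iff, Set.Nonempty, mem_sdiff, mem_Iio, not_lt]

end Set

theorem admissible_small_tree_general (L : Set ℕ) (hL : Admissible L) :
    ∃ (V : Type) (_ : Fintype V) (R : SimpleGraph V) (v : V),
      R.IsTree ∧ Nat.card V ≤ 7 ∧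
      leafDistSet R v ∩ {0, 1, 2} = L ∩ {0, 1, 2} ∧
      (3 ∈ leafDistSet R v ↔ (L \ {0, 1, 2}).Nonempty) := by
  obtain ⟨W, _, G, w, hG, rfl⟩ := hL
  have h01 : 0 ∈ (min · 3) '' leafDistSet G w → 1 ∈ (min · 3) '' leafDistSet G w →
      (min · 3) '' leafDistSet G w ⊆ {0, 1} := fun h0 h1 => by
    rw [Set.mem_image_min_iff_of_lt (by norm_num)] at h0 h1
    have hsub := hG.connected.leafDistSet_subset_of_zero_mem_of_one_mem h0 h1
    exact (Set.image_mono hsub).trans (by simp [Set.image_pair])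
  obtain ⟨V, hV, R, v, hR, hcard, hRv⟩ := exists_small_tree_leafDistSet_eq
    (Set.image_min_subset_Iic _ 3) ((hG.leafDistSet_nonempty w).image _) h01
  have hIio : ({0, 1, 2} : Set ℕ) = Set.Iio 3 := by
    ext; simp only [Set.mem_insert_iff, Set.mem_singleton_iff, Set.mem_Iio]; omega
  refine ⟨V, hV, R, v, hR, hcard, ?_, ?_⟩
  · rw [hRv, hIio, Set.image_min_inter_Iio]
  · rw [hRv, hIio, Set.mem_image_min_iff]

/-- For every admissible finite set `L ⊆ ℕ ∪ {0}` there is a tree `R` on at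
most 7 vertices and a vertex `v` of `R` such that `L(v) ∩ {0,1,2} = L ∩ {0,1,2}` and
`3 ∈ L(v)` iff `L \ {0,1,2}` is nonempty. -/
theorem admissible_small_tree (L : Set ℕ) (hfin : L.Finite) (hL : Admissible L) :
    ∃ (V : Type) (_ : Fintype V) (R : SimpleGraph V) (v : V),
      R.IsTree ∧ Nat.card V ≤ 7 ∧
      leafDistSet R v ∩ {0, 1, 2} = L ∩ {0, 1, 2} ∧
      (3 ∈ leafDistSet R v ↔ (L \ {0, 1, 2}).Nonempty) :=
  admissible_small_tree_general L hL
end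

section
/- Let 0 < α < 1 and p = n^{-α}. Then a.a.s., for every set of m = 2⌊n^{α} ln ln n⌋ distinct vertices v_1,...,v_m of G(n,p), there exists a vertex adjacent to none of v_1,...,v_m. The failure probability is at most n^m e^{-(n-m)/(ln n)^4} for large n. -/
set_option linter.unusedSectionVars false
set_option linter.unusedVariables false
set_option maxHeartbeats 1000000

open Filter

section Bernoulli

variable {ι : Type*} [Fintype ι] [DecidableEq ι]

noncomputable def bw (p : ℝ) (f : ι → Bool) : ℝ := ∏ i, (if f i then p else 1 - p)

open Classical in
noncomputable def Pr (p : ℝ) (A : (ι → Bool) → Prop) : ℝ :=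
  ∑ f : ι → Bool, if A f then bw p f else 0

lemma bw_nonneg {p : ℝ} (h0 : 0 ≤ p) (h1 : p ≤ 1) (f : ι → Bool) : 0 ≤ bw p f :=
  Finset.prod_nonneg fun i _ => by split <;> linarith

lemma sum_bw (p : ℝ) : ∑ f : ι → Bool, bw p f = 1 := by
  rw [show (1:ℝ) = ∏ _i : ι, ∑ b : Bool, (if b then p else 1 - p) by simp]
  rw [Fintype.prod_sum (fun (_ : ι) (b : Bool) => if b then p else 1 - p)]
  rfl

lemma Pr_congr {p : ℝ} {A B : (ι → Bool) → Prop} (h : ∀ f, A f ↔ B f) :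
    Pr p A = Pr p B := by
  classical
  apply Finset.sum_congr rfl
  intro f _
  by_cases hA : A f
  · rw [if_pos hA, if_pos ((h f).1 hA)]
  · rw [if_neg hA, if_neg (fun hB => hA ((h f).2 hB))]

lemma Pr_nonneg {p : ℝ} (h0 : 0 ≤ p) (h1 : p ≤ 1) (A : (ι → Bool) → Prop) :
    0 ≤ Pr p A := by
  classical
  apply Finset.sum_nonneg
  intro f _
  split
  · exact bw_nonneg h0 h1 f
  · exact le_refl 0

lemma Pr_true (p : ℝ) : Pr p (fun _ : ι → Bool => True) = 1 := by
  classical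
  rw [Pr, ← sum_bw (ι := ι) p]
  apply Finset.sum_congr rfl
  intro f _
  rw [if_pos trivial]

lemma Pr_mono {p : ℝ} (h0 : 0 ≤ p) (h1 : p ≤ 1) {A B : (ι → Bool) → Prop}
    (h : ∀ f, A f → B f) : Pr p A ≤ Pr p B := by
  classical
  apply Finset.sum_le_sum
  intro f _
  by_cases hA : A f
  · rw [if_pos hA, if_pos (h f hA)]
  · rw [if_neg hA]
    split
    · exact bw_nonneg h0 h1 f
    · exact le_refl 0

lemma Pr_not_eq (p : ℝ) (A : (ι → Bool) → Prop) :
    Pr p (fun f => ¬ A f) = 1 - Pr p A := by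
  classical
  rw [eq_sub_iff_add_eq, Pr, Pr, ← Finset.sum_add_distrib, ← sum_bw (ι := ι) p]
  apply Finset.sum_congr rfl
  intro f _
  by_cases hA : A f
  · rw [if_pos hA, if_neg (not_not_intro hA), zero_add]
  · rw [if_pos hA, if_neg hA, add_zero]

lemma Pr_exists_le {p : ℝ} (h0 : 0 ≤ p) (h1 : p ≤ 1) {κ : Type*} (W : Finset κ)
    (A : κ → (ι → Bool) → Prop) :
    Pr p (fun f => ∃ k ∈ W, A k f) ≤ ∑ k ∈ W, Pr p (A k) := by
  classical
  rw [Pr, show ∑ k ∈ W, Pr p (A k)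
      = ∑ f : ι → Bool, ∑ k ∈ W, (if A k f then bw p f else 0) from Finset.sum_comm]
  apply Finset.sum_le_sum
  intro f _
  by_cases h : ∃ k ∈ W, A k f
  · obtain ⟨k₀, hk₀, hA⟩ := h
    rw [if_pos ⟨k₀, hk₀, hA⟩]
    have hnn : ∀ k ∈ W, 0 ≤ (if A k f then bw p f else 0) := by
      intro k _
      split
      · exact bw_nonneg h0 h1 f
      · exact le_refl 0
    calc bw p f = (if A k₀ f then bw p f else 0) := by rw [if_pos hA]
    _ ≤ _ := Finset.single_le_sum hnn hk₀
  · rw [if_neg h]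
    apply Finset.sum_nonneg
    intro k _
    split
    · exact bw_nonneg h0 h1 f
    · exact le_refl 0

lemma sum_ite_prod_mul {β γ : Type*} [Fintype β] [Fintype γ] (u : β → ℝ) (v : γ → ℝ)
    (A : β → Prop) (B : γ → Prop) [DecidablePred A] [DecidablePred B] :
    ∑ x : β × γ, (if A x.1 ∧ B x.2 then u x.1 * v x.2 else 0) =
      (∑ b, if A b then u b else 0) * (∑ c, if B c then v c else 0) := by
  rw [Fintype.sum_prod_type, Finset.sum_mul_sum]
  apply Finset.sum_congr rfl
  intro a _
  apply Finset.sum_congr rfl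
  intro b _
  by_cases hA : A a <;> by_cases hB : B b <;> simp [hA, hB]

open Finset in
open Classical in
lemma Pr_and_eq_mul (p : ℝ) (P : ι → Prop) (A B : (ι → Bool) → Prop)
    (hA : ∀ f g : ι → Bool, (∀ i, P i → f i = g i) → A f → A g)
    (hB : ∀ f g : ι → Bool, (∀ i, ¬ P i → f i = g i) → B f → B g) :
    Pr p (fun f => A f ∧ B f) = Pr p A * Pr p B := by
  set e := Equiv.piEquivPiSubtypeProd P (fun _ => Bool) with he
  have hmem : ∀ (x : ({i : ι // P i} → Bool) × ({i : ι // ¬ P i} → Bool))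
      (i : ι) (hi : P i), e.symm x i = x.1 ⟨i, hi⟩ := by
    intro x i hi
    simp [he, Equiv.piEquivPiSubtypeProd, hi]
  have hnmem : ∀ (x : ({i : ι // P i} → Bool) × ({i : ι // ¬ P i} → Bool))
      (i : ι) (hi : ¬ P i), e.symm x i = x.2 ⟨i, hi⟩ := by
    intro x i hi
    simp [he, Equiv.piEquivPiSubtypeProd, hi]
  have hw : ∀ x, bw p (e.symm x) = bw p x.1 * bw p x.2 := by
    intro x
    rw [bw, ← Fintype.prod_subtype_mul_prod_subtype P
      (fun i => if e.symm x i then p else 1 - p)]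
    congr 1
    · exact Finset.prod_congr rfl fun i _ => by rw [hmem x i.1 i.2]
    · exact Finset.prod_congr rfl fun i _ => by rw [hnmem x i.1 i.2]
  have hA' : ∀ (a : {i : ι // P i} → Bool) b b', A (e.symm (a, b)) ↔ A (e.symm (a, b')) := by
    intro a b b'
    constructor <;> intro h
    · exact hA _ _ (fun i hi => by rw [hmem (a,b) i hi, hmem (a,b') i hi]) h
    · exact hA _ _ (fun i hi => by rw [hmem (a,b') i hi, hmem (a,b) i hi]) h
  have hB' : ∀ (b : {i : ι // ¬ P i} → Bool) a a', B (e.symm (a, b)) ↔ B (e.symm (a', b)) := by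
    intro b a a'
    constructor <;> intro h
    · exact hB _ _ (fun i hi => by rw [hnmem (a,b) i hi, hnmem (a',b) i hi]) h
    · exact hB _ _ (fun i hi => by rw [hnmem (a',b) i hi, hnmem (a,b) i hi]) h
  have key : ∀ C : (ι → Bool) → Prop,
      Pr p C = ∑ x : ({i : ι // P i} → Bool) × ({i : ι // ¬ P i} → Bool),
        (if C (e.symm x) then bw p x.1 * bw p x.2 else 0) := by
    intro C
    rw [Pr, ← Equiv.sum_comp e.symm (fun f => if C f then bw p f else 0)]
    exact Finset.sum_congr rfl fun x _ => by by_cases h : C (e.symm x) <;> simp [h, hw x]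
  set a₀ : {i : ι // P i} → Bool := fun _ => false
  set b₀ : {i : ι // ¬ P i} → Bool := fun _ => false
  have e1 : Pr p (fun f => A f ∧ B f)
      = (∑ a, if A (e.symm (a, b₀)) then bw p a else 0) *
        (∑ b, if B (e.symm (a₀, b)) then bw p b else 0) := by
    rw [key, ← sum_ite_prod_mul (bw p) (bw p) (fun a => A (e.symm (a, b₀)))
      (fun b => B (e.symm (a₀, b)))]
    apply Finset.sum_congr rfl
    intro x _
    congr 1
    rw [eq_iff_iff]
    constructor
    · rintro ⟨h1, h2⟩
      exact ⟨(hA' x.1 x.2 b₀).1 (by simpa using h1), (hB' x.2 x.1 a₀).1 (by simpa using h2)⟩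
    · rintro ⟨h1, h2⟩
      exact ⟨(hA' x.1 b₀ x.2).1 h1, (hB' x.2 a₀ x.1).1 h2⟩
  obtain ⟨TT, hTT⟩ : ∃ Q : Prop, Q := ⟨True, trivial⟩
  have e2 : Pr p A = ∑ a, if A (e.symm (a, b₀)) then bw p a else 0 := by
    calc Pr p A = ∑ x : ({i : ι // P i} → Bool) × ({i : ι // ¬ P i} → Bool),
        (if A (e.symm (x.1, b₀)) ∧ TT then bw p x.1 * bw p x.2 else 0) := by
          rw [key]
          apply Finset.sum_congr rfl
          intro x _
          congr 1
          rw [eq_iff_iff]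
          exact (hA' x.1 x.2 b₀).trans (and_iff_left hTT).symm
    _ = (∑ a, if A (e.symm (a, b₀)) then bw p a else 0) *
        (∑ b : {i : ι // ¬ P i} → Bool, if TT then bw p b else 0) :=
          sum_ite_prod_mul (β := {i : ι // P i} → Bool) (γ := {i : ι // ¬ P i} → Bool)
            (bw p) (bw p) (fun a => A (e.symm (a, b₀))) (fun _ => TT)
    _ = ∑ a, if A (e.symm (a, b₀)) then bw p a else 0 := by
          rw [show (∑ b : {i : ι // ¬ P i} → Bool, if TT then bw p b else 0)
            = ∑ b : {i : ι // ¬ P i} → Bool, bw p b from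
              Finset.sum_congr rfl fun b _ => if_pos hTT, sum_bw, mul_one]
  have e3 : Pr p B = ∑ b, if B (e.symm (a₀, b)) then bw p b else 0 := by
    calc Pr p B = ∑ x : ({i : ι // P i} → Bool) × ({i : ι // ¬ P i} → Bool),
        (if TT ∧ B (e.symm (a₀, x.2)) then bw p x.1 * bw p x.2 else 0) := by
          rw [key]
          apply Finset.sum_congr rfl
          intro x _
          congr 1
          rw [eq_iff_iff]
          exact (hB' x.2 x.1 a₀).trans (and_iff_right hTT).symm
    _ = (∑ a : {i : ι // P i} → Bool, if TT then bw p a else 0) *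
        (∑ b, if B (e.symm (a₀, b)) then bw p b else 0) :=
          sum_ite_prod_mul (β := {i : ι // P i} → Bool) (γ := {i : ι // ¬ P i} → Bool)
            (bw p) (bw p) (fun _ => TT) (fun b => B (e.symm (a₀, b)))
    _ = ∑ b, if B (e.symm (a₀, b)) then bw p b else 0 := by
          rw [show (∑ a : {i : ι // P i} → Bool, if TT then bw p a else 0)
            = ∑ a : {i : ι // P i} → Bool, bw p a from
              Finset.sum_congr rfl fun a _ => if_pos hTT, sum_bw, one_mul]
  rw [e1, e2, e3]

end Bernoulli

section Bernoulli2
variable {ι : Type*} [Fintype ι] [DecidableEq ι]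

lemma Pr_forall_eq_prod (p : ℝ) {κ : Type*} [DecidableEq κ] (W : Finset κ)
    (T : κ → Finset ι) (A : κ → (ι → Bool) → Prop)
    (hdisj : ∀ k ∈ W, ∀ l ∈ W, k ≠ l → Disjoint (T k) (T l))
    (hdep : ∀ k ∈ W, ∀ f g : ι → Bool, (∀ i ∈ T k, f i = g i) → A k f → A k g) :
    Pr p (fun f => ∀ k ∈ W, A k f) = ∏ k ∈ W, Pr p (A k) := by
  induction W using Finset.induction_on with
  | empty =>
    rw [Finset.prod_empty, ← Pr_true (ι := ι) p]
    exact Pr_congr fun f => by simp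
  | @insert a W ha ih =>
    rw [Finset.prod_insert ha, ← ih (fun k hk => fun l hl => hdisj k (Finset.mem_insert_of_mem hk)
        l (Finset.mem_insert_of_mem hl)) (fun k hk => hdep k (Finset.mem_insert_of_mem hk))]
    rw [Pr_congr (B := fun f => A a f ∧ ∀ k ∈ W, A k f) (fun f => by
      simp [Finset.forall_mem_insert])]
    apply Pr_and_eq_mul p (fun i => i ∈ T a)
    · exact hdep a (Finset.mem_insert_self a W)
    · intro f g hfg hall k hk
      apply hdep k (Finset.mem_insert_of_mem hk) f g _ (hall k hk)
      intro i hi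
      apply hfg
      have hd := hdisj k (Finset.mem_insert_of_mem hk) a (Finset.mem_insert_self a W)
        (fun h => ha (h ▸ hk))
      exact fun hmem => (Finset.disjoint_left.1 hd) hi hmem

lemma ite_inst {c : Prop} {i1 i2 : Decidable c} (a b : ℝ) :
    @ite _ c i1 a b = @ite _ c i2 a b := by
  rw [Subsingleton.elim i1 i2]

open Classical in
lemma Pr_allFalse (p : ℝ) (T : Finset ι) :
    Pr p (fun f => ∀ i ∈ T, f i = false) = (1 - p) ^ T.card := by
  have hpt : ∀ f : ι → Bool, (if (∀ i ∈ T, f i = false) then bw p f else 0)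
      = ∏ i, (if i ∈ T then (if f i then 0 else 1 - p) else (if f i then p else 1 - p)) := by
    intro f
    by_cases h : ∀ i ∈ T, f i = false
    · rw [if_pos h, bw]
      refine Finset.prod_congr rfl fun i _ => ?_
      by_cases hi : i ∈ T
      · simp [hi, h i hi]
      · simp [hi]
    · rw [if_neg h]
      push_neg at h
      obtain ⟨i₀, hi₀, hf⟩ := h
      rw [eq_comm]
      apply Finset.prod_eq_zero (Finset.mem_univ i₀)
      simp [hi₀, Bool.ne_false_iff.mp hf]
  have h1 : Pr p (fun f => ∀ i ∈ T, f i = false) = ∑ f : ι → Bool,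
      ∏ i, (if i ∈ T then (if f i then 0 else 1 - p) else (if f i then p else 1 - p)) :=
    Finset.sum_congr rfl fun f _ => (ite_inst _ _).trans (hpt f)
  rw [h1]
  rw [show (∑ f : ι → Bool, ∏ i,
      (if i ∈ T then (if f i then 0 else 1 - p) else (if f i then p else 1 - p)))
    = ∏ i, ∑ b : Bool, (if i ∈ T then (if b then 0 else 1 - p) else (if b then p else 1 - p))
    from (Fintype.prod_sum (ι := ι) (κ := fun _ => Bool)
      (fun i b => if i ∈ T then (if b then 0 else 1 - p) else (if b then p else 1 - p))).symm]
  rw [show (∏ i, ∑ b : Bool, (if i ∈ T then (if b then 0 else 1 - p) else (if b then p else 1 - p)))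
      = ∏ i, (if i ∈ T then (1 - p) else 1) from Finset.prod_congr rfl fun i _ => by
        by_cases hi : i ∈ T <;> simp [hi]]
  rw [← Finset.prod_filter_mul_prod_filter_not Finset.univ (· ∈ T)]
  rw [Finset.filter_mem_eq_inter, Finset.univ_inter]
  rw [Finset.prod_congr rfl (fun i hi => if_pos hi), Finset.prod_const]
  rw [Finset.prod_congr rfl (fun i hi => if_neg (Finset.mem_filter.1 hi).2), Finset.prod_const_one,
    mul_one]

open Classical in
lemma Pr_exists_true (p : ℝ) (T : Finset ι) :
    Pr p (fun f => ∃ i ∈ T, f i = true) = 1 - (1 - p) ^ T.card := by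
  rw [← Pr_allFalse p T, ← Pr_not_eq p]
  apply Pr_congr
  intro f
  simp [Bool.not_eq_false]

end Bernoulli2

-- `graphProb n p A` is the probability that the Erdős–Rényi random graph `G(n,p)` (each
-- of the `C(n,2)` possible edges present independently with probability `p`) satisfies
-- the property `A`.
open Classical in
noncomputable def graphProb (n : ℕ) (p : ℝ) (A : SimpleGraph (Fin n) → Prop) : ℝ :=
  ∑ G : SimpleGraph (Fin n),
    if A G then p ^ (Nat.card G.edgeSet) * (1 - p) ^ (n.choose 2 - Nat.card G.edgeSet) else 0

def avoidable (n m : ℕ) (G : SimpleGraph (Fin n)) : Prop :=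
  ∀ S : Finset (Fin n), S.card = m → ∃ w : Fin n, ∀ v ∈ S, ¬ G.Adj w v

abbrev Slot (n : ℕ) := {e : Sym2 (Fin n) // ¬ e.IsDiag}

lemma ite_tf {P : Prop} [Decidable P] : (if P then true else false) = true ↔ P := by
  split <;> simp [*]

open Classical in
noncomputable def gEquiv (n : ℕ) : SimpleGraph (Fin n) ≃ (Slot n → Bool) where
  toFun G e := if e.1 ∈ G.edgeSet then true else false
  invFun f := SimpleGraph.fromEdgeSet {e | ∃ h : ¬ e.IsDiag, f ⟨e, h⟩ = true}
  left_inv G := by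
    ext v w
    rw [SimpleGraph.fromEdgeSet_adj]
    constructor
    · rintro ⟨⟨h, hif⟩, hne⟩
      exact (SimpleGraph.mem_edgeSet G).1 (ite_tf.1 hif)
    · intro hadj
      have hne : v ≠ w := G.ne_of_adj hadj
      refine ⟨⟨?_, ?_⟩, hne⟩
      · rw [Sym2.mk_isDiag_iff]; exact hne
      · exact ite_tf.2 ((SimpleGraph.mem_edgeSet G).2 hadj)
  right_inv f := by
    funext e
    obtain ⟨e, he⟩ := e
    dsimp only
    simp only [SimpleGraph.edgeSet_fromEdgeSet]
    by_cases hf : f ⟨e, he⟩ = true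
    · rw [if_pos]
      · exact hf.symm
      · exact ⟨⟨he, hf⟩, he⟩
    · rw [if_neg]
      · exact (Bool.eq_false_iff.2 hf).symm
      · rintro ⟨⟨h', hf'⟩, -⟩
        exact hf hf'

lemma card_slot (n : ℕ) : Fintype.card (Slot n) = n.choose 2 := by
  rw [Sym2.card_subtype_not_diag, Fintype.card_fin]

def eEquiv (n : ℕ) (G : SimpleGraph (Fin n)) : {e : Slot n // e.1 ∈ G.edgeSet} ≃ G.edgeSet where
  toFun e := ⟨e.1.1, e.2⟩
  invFun x := ⟨⟨x.1, G.not_isDiag_of_mem_edgeSet x.2⟩, x.2⟩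
  left_inv e := by ext; rfl
  right_inv x := by ext; rfl

open Classical in
lemma bw_eq_pow {ι : Type*} [Fintype ι] [DecidableEq ι] (p : ℝ) (f : ι → Bool) :
    bw p f = p ^ (Finset.univ.filter fun i => f i = true).card *
      (1 - p) ^ (Fintype.card ι - (Finset.univ.filter fun i => f i = true).card) := by
  rw [bw, ← Finset.prod_filter_mul_prod_filter_not Finset.univ (fun i => f i = true)]
  congr 1
  · rw [Finset.prod_congr rfl (fun i hi => if_pos (Finset.mem_filter.1 hi).2),
      Finset.prod_const]
  · rw [Finset.prod_congr rfl (fun i hi => if_neg (Finset.mem_filter.1 hi).2),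
      Finset.prod_const]
    congr 1
    have := Finset.card_filter_add_card_filter_not (s := Finset.univ)
      (p := fun i : ι => f i = true)
    rw [← Finset.card_univ]
    omega

open Classical in
lemma bw_gEquiv (n : ℕ) (p : ℝ) (G : SimpleGraph (Fin n)) :
    bw p (gEquiv n G) = p ^ (Nat.card G.edgeSet) * (1 - p) ^ (n.choose 2 - Nat.card G.edgeSet) := by
  have hcard : (Finset.univ.filter fun e : Slot n => gEquiv n G e = true).card
      = Nat.card G.edgeSet := by
    rw [← Fintype.card_subtype]
    have h1 : ∀ e : Slot n, (gEquiv n G e = true) ↔ e.1 ∈ G.edgeSet := by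
      intro e
      exact ite_tf
    rw [Fintype.card_congr ((Equiv.subtypeEquivRight h1).trans (eEquiv n G))]
    rw [Nat.card_eq_fintype_card]
  rw [bw_eq_pow, hcard, card_slot]

open Classical in
lemma graphProb_eq_Pr (n : ℕ) (p : ℝ) (A : SimpleGraph (Fin n) → Prop) :
    graphProb n p A = Pr p (fun f : Slot n → Bool => A ((gEquiv n).symm f)) := by
  rw [graphProb, Pr, ← Equiv.sum_comp (gEquiv n)
    (fun f => if A ((gEquiv n).symm f) then bw p f else 0)]
  apply Finset.sum_congr rfl
  intro G _
  rw [Equiv.symm_apply_apply]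
  by_cases h : A G
  · rw [if_pos h, if_pos h, bw_gEquiv]
  · rw [if_neg h, if_neg h]

open Classical in
lemma graphProb_nonneg (n : ℕ) (p : ℝ) (h0 : 0 ≤ p) (h1 : p ≤ 1)
    (A : SimpleGraph (Fin n) → Prop) : 0 ≤ graphProb n p A := by
  rw [graphProb_eq_Pr]
  exact Pr_nonneg h0 h1 _

open Classical in
lemma graphProb_compl (n : ℕ) (p : ℝ) (A : SimpleGraph (Fin n) → Prop) :
    graphProb n p (fun G => ¬ A G) = 1 - graphProb n p A := by
  rw [graphProb_eq_Pr, graphProb_eq_Pr n p A]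
  exact Pr_not_eq p _

open Classical

noncomputable def Tset (n : ℕ) (S : Finset (Fin n)) (w : Fin n) : Finset (Slot n) :=
  Finset.univ.filter (fun i : Slot n => ∃ v ∈ S, i.1 = s(w, v))

lemma card_Tset (n : ℕ) (S : Finset (Fin n)) (w : Fin n) (hw : w ∉ S) :
    (Tset n S w).card = S.card := by
  symm
  apply Finset.card_bij (fun (v : Fin n) (hv : v ∈ S) =>
    (⟨s(w, v), by rw [Sym2.mk_isDiag_iff]; rintro rfl; exact hw hv⟩ : Slot n))
  · intro v hv
    rw [Tset, Finset.mem_filter]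
    exact ⟨Finset.mem_univ _, v, hv, rfl⟩
  · intro v hv v' hv' h
    have h2 : s(w, v) = s(w, v') := congrArg Subtype.val h
    rw [Sym2.eq_iff] at h2
    rcases h2 with ⟨-, h2⟩ | ⟨h2, h3⟩
    · exact h2
    · exact absurd (h2 ▸ hv') hw
  · intro i hi
    rw [Tset, Finset.mem_filter] at hi
    obtain ⟨-, v, hv, hval⟩ := hi
    exact ⟨v, hv, Subtype.ext hval.symm⟩

lemma disjoint_Tset (n : ℕ) (S : Finset (Fin n)) (w w' : Fin n)
    (hw : w ∉ S) (hw' : w' ∉ S) (hne : w ≠ w') :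
    Disjoint (Tset n S w) (Tset n S w') := by
  rw [Finset.disjoint_left]
  intro i hi hi'
  rw [Tset, Finset.mem_filter] at hi hi'
  obtain ⟨-, v, hv, hval⟩ := hi
  obtain ⟨-, v', hv', hval'⟩ := hi'
  rw [hval] at hval'
  rw [Sym2.eq_iff] at hval'
  rcases hval' with ⟨h1, -⟩ | ⟨h1, h2⟩
  · exact hne h1
  · exact hw (h1 ▸ hv')

lemma not_avoidable_imp (n m : ℕ) (f : Slot n → Bool)
    (h : ¬ avoidable n m ((gEquiv n).symm f)) :
    ∃ S ∈ Finset.powersetCard m (Finset.univ : Finset (Fin n)),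
      ∀ w ∈ Sᶜ, ∃ i ∈ Tset n S w, f i = true := by
  rw [avoidable] at h
  push_neg at h
  obtain ⟨S, hcard, hS⟩ := h
  refine ⟨S, Finset.mem_powersetCard_univ.2 hcard, ?_⟩
  intro w hw
  obtain ⟨v, hv, hadj⟩ := hS w
  have hadj' := hadj
  rw [show (gEquiv n).symm f = SimpleGraph.fromEdgeSet {e | ∃ h : ¬ e.IsDiag, f ⟨e, h⟩ = true}
    from rfl, SimpleGraph.fromEdgeSet_adj] at hadj'
  obtain ⟨⟨hd, hf⟩, -⟩ := hadj'
  refine ⟨⟨s(w, v), hd⟩, ?_, hf⟩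
  rw [Tset, Finset.mem_filter]
  exact ⟨Finset.mem_univ _, v, hv, rfl⟩

lemma graphProb_bound (n m : ℕ) (p : ℝ) (h0 : 0 ≤ p) (h1 : p ≤ 1) :
    graphProb n p (fun G => ¬ avoidable n m G) ≤
      (n.choose m : ℝ) * (1 - (1 - p) ^ m) ^ (n - m) := by
  rw [graphProb_eq_Pr]
  have step1 : Pr p (fun f : Slot n → Bool => ¬ avoidable n m ((gEquiv n).symm f)) ≤
      Pr p (fun f : Slot n → Bool => ∃ S ∈ Finset.powersetCard m (Finset.univ : Finset (Fin n)),
        ∀ w ∈ Sᶜ, ∃ i ∈ Tset n S w, f i = true) :=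
    Pr_mono h0 h1 (not_avoidable_imp n m)
  have step2 : Pr p (fun f : Slot n → Bool =>
      ∃ S ∈ Finset.powersetCard m (Finset.univ : Finset (Fin n)),
        ∀ w ∈ Sᶜ, ∃ i ∈ Tset n S w, f i = true) ≤
      ∑ S ∈ Finset.powersetCard m (Finset.univ : Finset (Fin n)),
        Pr p (fun f : Slot n → Bool => ∀ w ∈ Sᶜ, ∃ i ∈ Tset n S w, f i = true) :=
    Pr_exists_le h0 h1 _ _
  have step3 : ∀ S ∈ Finset.powersetCard m (Finset.univ : Finset (Fin n)),
      Pr p (fun f : Slot n → Bool => ∀ w ∈ Sᶜ, ∃ i ∈ Tset n S w, f i = true)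
        = (1 - (1 - p) ^ m) ^ (n - m) := by
    intro S hS
    have hcard : S.card = m := Finset.mem_powersetCard_univ.1 hS
    rw [Pr_forall_eq_prod p Sᶜ (Tset n S) (fun w f => ∃ i ∈ Tset n S w, f i = true)]
    · rw [Finset.prod_congr rfl (fun w hw => ?_), Finset.prod_const, Finset.card_compl,
        Fintype.card_fin, hcard]
      rw [Pr_exists_true, card_Tset n S w (Finset.mem_compl.1 hw), hcard]
    · intro k hk l hl hne
      exact disjoint_Tset n S k l (Finset.mem_compl.1 hk) (Finset.mem_compl.1 hl) hne
    · intro k _ f g hfg ⟨i, hi, hf⟩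
      exact ⟨i, hi, (hfg i hi) ▸ hf⟩
  calc Pr p (fun f : Slot n → Bool => ¬ avoidable n m ((gEquiv n).symm f))
      ≤ ∑ S ∈ Finset.powersetCard m (Finset.univ : Finset (Fin n)),
        Pr p (fun f : Slot n → Bool => ∀ w ∈ Sᶜ, ∃ i ∈ Tset n S w, f i = true) :=
        le_trans step1 step2
  _ = ∑ _S ∈ Finset.powersetCard m (Finset.univ : Finset (Fin n)),
        (1 - (1 - p) ^ m) ^ (n - m) := Finset.sum_congr rfl step3
  _ = (n.choose m : ℝ) * (1 - (1 - p) ^ m) ^ (n - m) := by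
      rw [Finset.sum_const, Finset.card_powersetCard, Finset.card_univ, Fintype.card_fin,
        nsmul_eq_mul]

open Real in
/-- For `0 < α < 1` and `p = n^{-α}`, with `m = 2⌊n^α ln ln n⌋`, a.a.s. for
every set of `m` distinct vertices there is a vertex adjacent to none of them; the
failure probability is eventually at most `n^m e^{-(n-m)/(ln n)^4}`. -/
theorem aas_avoidable (α : ℝ) (h0 : 0 < α) (h1 : α < 1) :
    Tendsto (fun n : ℕ => graphProb n ((n : ℝ) ^ (-α))
        (avoidable n (2 * ⌊(n : ℝ) ^ α * Real.log (Real.log n)⌋₊)))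
      atTop (nhds 1) ∧
    ∀ᶠ n : ℕ in atTop,
      graphProb n ((n : ℝ) ^ (-α))
          (fun G => ¬ avoidable n (2 * ⌊(n : ℝ) ^ α * Real.log (Real.log n)⌋₊) G) ≤
        (n : ℝ) ^ (2 * ⌊(n : ℝ) ^ α * Real.log (Real.log n)⌋₊) *
          Real.exp (-(((n : ℝ) - 2 * ⌊(n : ℝ) ^ α * Real.log (Real.log n)⌋₊) /
            (Real.log n) ^ 4)) := by
  have h1α : (0:ℝ) < 1 - α := by linarith
  set mm : ℕ → ℕ := fun n => 2 * ⌊(n : ℝ) ^ α * Real.log (Real.log n)⌋₊ with hmm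
  set pp : ℕ → ℝ := fun n => (n : ℝ) ^ (-α) with hpp
  have hcast : Tendsto (fun n : ℕ => (n : ℝ)) atTop atTop := tendsto_natCast_atTop_atTop
  -- p bounds for every n
  have hpb : ∀ n : ℕ, 0 ≤ pp n ∧ pp n ≤ 1 := by
    intro n
    rcases Nat.eq_zero_or_pos n with rfl | hn
    · simp [hpp, Real.zero_rpow (show (-α) ≠ 0 by intro h; rw [neg_eq_zero] at h; linarith)]
    · constructor
      · exact Real.rpow_nonneg (Nat.cast_nonneg n) _
      · exact Real.rpow_le_one_of_one_le_of_nonpos (by exact_mod_cast hn) (by linarith)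
  -- real-filter facts transported to ℕ
  have ev4L : ∀ᶠ x : ℝ in atTop, 4 * Real.log x ≤ x ^ (1 - α) := by
    filter_upwards [(isLittleO_log_rpow_atTop h1α).def (by norm_num : (0:ℝ) < 1/4),
      eventually_ge_atTop (1:ℝ)] with x hx hx1
    rw [Real.norm_eq_abs, Real.norm_eq_abs, abs_of_nonneg (Real.log_nonneg hx1),
      abs_of_nonneg (Real.rpow_nonneg (by linarith) _)] at hx
    linarith
  have ev8L6 : ∀ᶠ x : ℝ in atTop, 8 * (Real.log x) ^ (6:ℕ) ≤ x ^ (1 - α) := by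
    filter_upwards [(isLittleO_log_rpow_rpow_atTop (6:ℝ) h1α).def
      (by norm_num : (0:ℝ) < 1/8), eventually_ge_atTop (1:ℝ)] with x hx hx1
    rw [Real.norm_eq_abs, Real.norm_eq_abs,
      abs_of_nonneg (Real.rpow_nonneg (Real.log_nonneg hx1) _),
      abs_of_nonneg (Real.rpow_nonneg (by linarith) _),
      show (6:ℝ) = ((6:ℕ):ℝ) by norm_num, Real.rpow_natCast] at hx
    linarith
  have evA2 : ∀ᶠ n : ℕ in atTop, 2 ≤ (n:ℝ) ^ α :=
    ((tendsto_rpow_atTop h0).comp hcast).eventually_ge_atTop 2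
  -- the master eventual bound package
  have master : ∀ᶠ n : ℕ in atTop,
      graphProb n (pp n) (fun G => ¬ avoidable n (mm n) G) ≤
        (n:ℝ) ^ (mm n) * Real.exp (-(((n:ℝ) - (mm n)) / (Real.log n) ^ 4)) ∧
      (n:ℝ) ^ (mm n) * Real.exp (-(((n:ℝ) - (mm n)) / (Real.log n) ^ 4)) ≤
        Real.exp (-((n:ℝ) / (4 * (Real.log n) ^ 4))) := by
    filter_upwards [eventually_ge_atTop 3, hcast.eventually ev4L, hcast.eventually ev8L6, evA2]
      with n hn3 h4L h8L6 hA2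
    set N : ℝ := (n : ℝ) with hN
    have hN3 : (3:ℝ) ≤ N := by rw [hN]; exact_mod_cast hn3
    have hN0 : (0:ℝ) < N := by linarith
    have hN1 : (1:ℝ) ≤ N := by linarith
    set L : ℝ := Real.log N with hL
    have hL1 : 1 < L := by
      rw [hL, Real.lt_log_iff_exp_lt hN0]
      calc Real.exp 1 < 2.7182818286 := Real.exp_one_lt_d9
      _ < 3 := by norm_num
      _ ≤ N := hN3
    have hL0 : (0:ℝ) < L := by linarith
    set C : ℝ := Real.log L with hC
    have hC0 : 0 ≤ C := Real.log_nonneg hL1.le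
    have hCL : C ≤ L := by
      have := Real.log_le_sub_one_of_pos hL0
      linarith
    set A : ℝ := N ^ α with hA
    have hA0 : (0:ℝ) < A := Real.rpow_pos_of_pos hN0 α
    have hM0 : 0 ≤ A * C := mul_nonneg hA0.le hC0
    have hm2M : ((mm n : ℕ) : ℝ) ≤ 2 * (A * C) := by
      rw [hmm]
      push_cast
      have := Nat.floor_le hM0
      linarith
    have hppA : pp n * A = 1 := by
      show N ^ (-α) * A = 1
      rw [hA, Real.rpow_neg hN0.le]
      exact inv_mul_cancel₀ (ne_of_gt (Real.rpow_pos_of_pos hN0 α))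
    have hp0 : 0 ≤ pp n := (hpb n).1
    have hp1 : pp n ≤ 1 := (hpb n).2
    have hp12 : pp n ≤ 1/2 := by
      have h2A : pp n * 2 ≤ pp n * A := mul_le_mul_of_nonneg_left hA2 hp0
      rw [hppA] at h2A
      linarith
    have hAL : A * N ^ (1 - α) = N := by
      rw [hA, ← Real.rpow_add hN0]
      norm_num
    have hmN2 : ((mm n : ℕ) : ℝ) ≤ N / 2 := by
      have t1 : 2 * (A * C) ≤ 2 * (A * L) := by
        nlinarith [mul_le_mul_of_nonneg_left hCL hA0.le]
      have t2 : 4 * (A * L) ≤ A * N ^ (1 - α) := by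
        nlinarith [mul_le_mul_of_nonneg_left h4L hA0.le]
      linarith
    have hmn : mm n ≤ n := by
      have h2 : ((mm n : ℕ):ℝ) ≤ N := by linarith
      rw [hN] at h2
      exact_mod_cast h2
    -- core probability bound
    set q : ℝ := (1 - pp n) ^ (mm n) with hq
    have h1p0 : 0 ≤ 1 - pp n := by linarith
    have hq0 : 0 ≤ q := pow_nonneg h1p0 _
    have hq1 : q ≤ 1 := pow_le_one₀ h1p0 (by linarith)
    -- q ≥ 1/L^4
    have hqL : (L ^ 4)⁻¹ ≤ q := by
      have c1 : Real.exp (-(2 * pp n)) ≤ 1 - pp n := by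
        have hE := Real.add_one_le_exp (2 * pp n)
        have hEpos : (0:ℝ) < Real.exp (2 * pp n) := Real.exp_pos _
        rw [Real.exp_neg]
        have h2 : (Real.exp (2 * pp n))⁻¹ * Real.exp (2 * pp n) = 1 :=
          inv_mul_cancel₀ (ne_of_gt hEpos)
        have hinv0 : 0 < (Real.exp (2 * pp n))⁻¹ := inv_pos.2 hEpos
        nlinarith [mul_le_mul_of_nonneg_left hE hinv0.le]
      have c2 : Real.exp (-(2 * pp n)) ^ (mm n) ≤ q :=
        pow_le_pow_left₀ (Real.exp_pos _).le c1 _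
      have c3 : Real.exp (-(2 * pp n)) ^ (mm n) = Real.exp (-(2 * (pp n * (mm n)))) := by
        rw [← Real.exp_nat_mul]
        congr 1
        ring
      have c4 : pp n * ((mm n : ℕ):ℝ) ≤ 2 * C := by
        have := mul_le_mul_of_nonneg_left hm2M hp0
        calc pp n * ((mm n : ℕ):ℝ) ≤ pp n * (2 * (A * C)) := this
        _ = 2 * ((pp n * A) * C) := by ring
        _ = 2 * C := by rw [hppA]; ring
      have c5 : Real.exp (-(4 * C)) ≤ Real.exp (-(2 * (pp n * (mm n)))) := by
        apply Real.exp_le_exp.2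
        nlinarith
      have c6 : Real.exp (-(4 * C)) = (L ^ 4)⁻¹ := by
        rw [Real.exp_neg]
        congr 1
        rw [show (4:ℝ) * C = ((4:ℕ):ℝ) * C by norm_num, Real.exp_nat_mul, hC,
          Real.exp_log hL0]
      rw [← c6]
      calc Real.exp (-(4*C)) ≤ Real.exp (-(2 * (pp n * (mm n)))) := c5
      _ = Real.exp (-(2 * pp n)) ^ (mm n) := c3.symm
      _ ≤ q := c2
    have hnmcast : ((n - mm n : ℕ) : ℝ) = N - ((mm n : ℕ):ℝ) := by
      rw [Nat.cast_sub hmn]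
    have hL4 : (0:ℝ) < L ^ 4 := by positivity
    -- first bound
    have bnd1 : graphProb n (pp n) (fun G => ¬ avoidable n (mm n) G) ≤
        N ^ (mm n) * Real.exp (-((N - (mm n)) / L ^ 4)) := by
      have b1 := graphProb_bound n (mm n) (pp n) hp0 hp1
      have b2 : ((n.choose (mm n) : ℕ) : ℝ) ≤ N ^ (mm n) := by
        rw [hN]
        exact_mod_cast Nat.choose_le_pow n (mm n)
      have b4 : 1 - q ≤ Real.exp (-q) := by
        have := Real.add_one_le_exp (-q)
        linarith
      have b5 : (1 - q) ^ (n - mm n) ≤ Real.exp (-q) ^ (n - mm n) :=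
        pow_le_pow_left₀ (by linarith) b4 _
      have b6 : Real.exp (-q) ^ (n - mm n) = Real.exp (-(((n - mm n : ℕ):ℝ) * q)) := by
        rw [← Real.exp_nat_mul]
        congr 1
        ring
      have b7 : Real.exp (-(((n - mm n : ℕ):ℝ) * q)) ≤ Real.exp (-((N - (mm n)) / L ^ 4)) := by
        apply Real.exp_le_exp.2
        rw [neg_le_neg_iff, hnmcast, div_eq_mul_inv]
        apply mul_le_mul_of_nonneg_left hqL
        linarith
      calc graphProb n (pp n) (fun G => ¬ avoidable n (mm n) G)
          ≤ (n.choose (mm n) : ℝ) * (1 - q) ^ (n - mm n) := b1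
      _ ≤ N ^ (mm n) * Real.exp (-((N - (mm n)) / L ^ 4)) := by
          apply mul_le_mul b2 (le_trans b5 (le_of_eq b6) |>.trans b7)
            (pow_nonneg (by linarith) _) (pow_nonneg hN0.le _)
    -- second bound
    have bnd2 : N ^ (mm n) * Real.exp (-((N - (mm n)) / L ^ 4)) ≤
        Real.exp (-(N / (4 * L ^ 4))) := by
      have hNpow : N ^ (mm n) = Real.exp (((mm n : ℕ):ℝ) * L) := by
        rw [Real.exp_nat_mul, hL, Real.exp_log hN0]
      rw [hNpow, ← Real.exp_add]
      apply Real.exp_le_exp.2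
      have k1 : ((mm n : ℕ):ℝ) * L ≤ (N / 4) / L ^ 4 := by
        rw [div_div, le_div_iff₀ (by positivity)]
        have t1 : ((mm n : ℕ):ℝ) * L * (4 * L ^ 4) = 4 * (((mm n : ℕ):ℝ)) * L ^ 5 := by ring
        have t2 : ((mm n : ℕ):ℝ) * L ^ 5 ≤ 2 * (A * C) * L ^ 5 :=
          mul_le_mul_of_nonneg_right hm2M (by positivity)
        have t3 : 2 * (A * C) * L ^ 5 ≤ 2 * A * L ^ 6 := by
          nlinarith [mul_le_mul_of_nonneg_left hCL
            (show (0:ℝ) ≤ 2 * A * L ^ 5 by positivity)]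
        have t4 : 8 * A * L ^ 6 ≤ A * N ^ (1 - α) := by
          nlinarith [mul_le_mul_of_nonneg_left h8L6 hA0.le]
        linarith
      have k2 : (N / 2) / L ^ 4 ≤ (N - (mm n)) / L ^ 4 :=
        (div_le_div_iff_of_pos_right hL4).2 (by linarith)
      have k3 : (N / 4) / L ^ 4 - (N / 2) / L ^ 4 = -(N / (4 * L ^ 4)) := by
        field_simp
        ring
      linarith
    exact ⟨bnd1, bnd2⟩
  -- limit of the majorant
  have hdiv : Tendsto (fun x : ℝ => x / (Real.log x) ^ 4) atTop atTop := by
    have hlo : Tendsto (fun x : ℝ => (Real.log x) ^ 4 / x) atTop (nhds 0) := by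
      have h := (Real.isLittleO_pow_log_id_atTop (n := 4)).tendsto_div_nhds_zero
      exact h
    have hpos : ∀ᶠ x : ℝ in atTop, (Real.log x) ^ 4 / x ∈ Set.Ioi (0:ℝ) := by
      filter_upwards [eventually_ge_atTop (3:ℝ)] with x hx
      have hx0 : (0:ℝ) < x := by linarith
      have hlx : 0 < Real.log x := Real.log_pos (by linarith)
      exact div_pos (by positivity) hx0
    have h01 : Tendsto (fun x : ℝ => (Real.log x) ^ 4 / x) atTop (nhdsWithin 0 (Set.Ioi 0)) :=
      tendsto_nhdsWithin_of_tendsto_nhds_of_eventually_within _ hlo hpos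
    have hinv := tendsto_inv_nhdsGT_zero.comp h01
    apply hinv.congr'
    filter_upwards [eventually_ge_atTop (3:ℝ)] with x hx
    rw [Function.comp_apply, inv_div]
  have hg : Tendsto (fun n : ℕ => Real.exp (-((n:ℝ) / (4 * (Real.log n) ^ 4))))
      atTop (nhds 0) := by
    have h2 : Tendsto (fun x : ℝ => x / (4 * (Real.log x) ^ 4)) atTop atTop := by
      have := hdiv.atTop_div_const (show (0:ℝ) < 4 by norm_num)
      apply this.congr
      intro x
      ring
    have h3 : Tendsto (fun x : ℝ => -(x / (4 * (Real.log x) ^ 4))) atTop atBot :=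
      tendsto_neg_atTop_atBot.comp h2
    exact (Real.tendsto_exp_atBot.comp (h3.comp hcast))
  have hqnn : ∀ᶠ n : ℕ in atTop,
      0 ≤ graphProb n (pp n) (fun G => ¬ avoidable n (mm n) G) :=
    Eventually.of_forall fun n => graphProb_nonneg n (pp n) (hpb n).1 (hpb n).2 _
  have hq0 : Tendsto (fun n : ℕ => graphProb n (pp n) (fun G => ¬ avoidable n (mm n) G))
      atTop (nhds 0) := by
    apply squeeze_zero' hqnn (master.mono fun n h => h.1.trans h.2) hg
  constructor
  · have hid : ∀ n : ℕ, graphProb n (pp n) (avoidable n (mm n))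
        = 1 - graphProb n (pp n) (fun G => ¬ avoidable n (mm n) G) := by
      intro n
      have := graphProb_compl n (pp n) (avoidable n (mm n))
      linarith
    have h2 := (tendsto_const_nhds (x := (1:ℝ)) (f := atTop)).sub hq0
    rw [sub_zero] at h2
    exact h2.congr fun n => (hid n).symm
  · filter_upwards [master] with n h
    have hb := h.1
    have e2 : (n:ℝ) - 2 * (⌊(n:ℝ) ^ α * Real.log (Real.log n)⌋₊ : ℝ)
        = (n:ℝ) - ((mm n : ℕ):ℝ) := by
      rw [hmm]
      push_cast
      ring
    rw [e2]
    exact hb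
end

section
/- Let 0 < α < 2/3 and p = n^{-α}. Then a.a.s. there is no vertex v in G(n,p) whose neighborhood N(v) is an independent set; i.e., the probability that some vertex has an independent neighborhood tends to 0 as n → ∞. -/
open Filter

/-!
`G(n,p)` is realised by independent Bernoulli(`p`) coins on the edges of the complete graph.
Fix a vertex `v` and `k = ⌊np/8⌋`. If `N(v)` is independent, then either `deg v ≤ k`, or
`N(v) = S` for some `S ∌ v` with `|S| > k` that is independent. By Markov's inequality the
first event has probability at most `2^k 𝔼[2^(-deg v)] = 2^k (1 - p/2)^(n-1) ≤ exp(-np/8)`.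
The events `N(v) = S` are disjoint, and the independence of `S` only involves edges not at
`v`, so the second event has probability at most `(1-p)^C(k+1,2) ≤ exp(-n²p³/512)`. A union
bound over `v` gives `n (exp(-n^(1-α)/8) + exp(-n^(2-3α)/512)) → 0`, since `α < 2/3`.
-/

namespace ErdosRenyi

open Finset

section Bernoulli

variable {E : Type*} [Fintype E] {p : ℝ}

noncomputable def bernoulliWeight (p : ℝ) (ω : E → Bool) : ℝ :=
  ∏ e, if ω e then p else 1 - p

lemma bernoulliWeight_nonneg (hp0 : 0 ≤ p) (hp1 : p ≤ 1) (ω : E → Bool) :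
    0 ≤ bernoulliWeight p ω :=
  prod_nonneg fun e _ => by split <;> linarith

variable [DecidableEq E]

noncomputable def bernoulliExpect (p : ℝ) (F : (E → Bool) → ℝ) : ℝ :=
  ∑ ω, bernoulliWeight p ω * F ω

lemma bernoulliExpect_mono (hp0 : 0 ≤ p) (hp1 : p ≤ 1) {F G : (E → Bool) → ℝ}
    (h : ∀ ω, F ω ≤ G ω) : bernoulliExpect p F ≤ bernoulliExpect p G :=
  sum_le_sum fun ω _ => mul_le_mul_of_nonneg_left (h ω) (bernoulliWeight_nonneg hp0 hp1 ω)

lemma bernoulliExpect_nonneg (hp0 : 0 ≤ p) (hp1 : p ≤ 1) {F : (E → Bool) → ℝ}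
    (h : ∀ ω, 0 ≤ F ω) : 0 ≤ bernoulliExpect p F :=
  sum_nonneg fun ω _ => mul_nonneg (bernoulliWeight_nonneg hp0 hp1 ω) (h ω)

lemma bernoulliExpect_add (F G : (E → Bool) → ℝ) :
    bernoulliExpect p (fun ω => F ω + G ω) = bernoulliExpect p F + bernoulliExpect p G := by
  simp only [bernoulliExpect, mul_add, sum_add_distrib]

lemma bernoulliExpect_const_mul (c : ℝ) (F : (E → Bool) → ℝ) :
    bernoulliExpect p (fun ω => c * F ω) = c * bernoulliExpect p F := by
  simp only [bernoulliExpect, mul_sum, mul_left_comm]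

lemma bernoulliExpect_sum {ι : Type*} (s : Finset ι) (F : ι → (E → Bool) → ℝ) :
    bernoulliExpect p (fun ω => ∑ i ∈ s, F i ω) = ∑ i ∈ s, bernoulliExpect p (F i) := by
  simp only [bernoulliExpect, mul_sum]
  exact sum_comm

theorem bernoulliExpect_eq_prod {F : (E → Bool) → ℝ} (f : E → Bool → ℝ)
    (hF : ∀ ω, F ω = ∏ e, f e (ω e)) :
    bernoulliExpect p F = ∏ e, (p * f e true + (1 - p) * f e false) := by
  simp only [bernoulliExpect, hF, bernoulliWeight, ← prod_mul_distrib]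
  rw [← Fintype.prod_sum (fun e b => (if b then p else 1 - p) * f e b)]
  simp

lemma bernoulliExpect_one (p : ℝ) : bernoulliExpect p (fun _ : E → Bool => 1) = 1 := by
  simpa using bernoulliExpect_eq_prod (p := p) (fun (_ : E) _ => 1) (by simp)

theorem bernoulliExpect_mul_of_prod_disjoint {F G : (E → Bool) → ℝ} (f g : E → Bool → ℝ)
    (hF : ∀ ω, F ω = ∏ e, f e (ω e)) (hG : ∀ ω, G ω = ∏ e, g e (ω e))
    (hfg : ∀ e, f e = 1 ∨ g e = 1) :
    bernoulliExpect p (fun ω => F ω * G ω) = bernoulliExpect p F * bernoulliExpect p G := by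
  rw [bernoulliExpect_eq_prod f hF, bernoulliExpect_eq_prod g hG, ← prod_mul_distrib,
    bernoulliExpect_eq_prod (fun e b => f e b * g e b) (by simp [hF, hG, prod_mul_distrib])]
  refine Fintype.prod_congr _ _ fun e => ?_
  rcases hfg e with h | h <;> simp only [h, Pi.one_apply] <;> ring

end Bernoulli

lemma two_pow_mul_one_sub_half_pow_le_exp {p : ℝ} (hp : p ≤ 2) (k m : ℕ) :
    2 ^ k * (1 - p / 2) ^ m ≤ Real.exp (k - m * p / 2) := by
  have h2 : (2 : ℝ) ≤ Real.exp 1 := by linarith [Real.add_one_le_exp 1]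
  calc 2 ^ k * (1 - p / 2) ^ m ≤ Real.exp 1 ^ k * Real.exp (-(p / 2)) ^ m :=
        mul_le_mul (pow_le_pow_left₀ (by norm_num) h2 k)
          (pow_le_pow_left₀ (by linarith) (Real.one_sub_le_exp_neg _) m)
          (pow_nonneg (by linarith) m) (by positivity)
    _ = Real.exp (k - m * p / 2) := by
        rw [← Real.exp_nat_mul, ← Real.exp_nat_mul, ← Real.exp_add]
        ring_nf

lemma one_sub_pow_choose_two_le_exp {p : ℝ} (hp0 : 0 ≤ p) (hp1 : p ≤ 1) (k : ℕ) :
    (1 - p) ^ (k + 1).choose 2 ≤ Real.exp (-(k ^ 2 * p / 2)) := by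
  calc (1 - p) ^ (k + 1).choose 2 ≤ Real.exp (-p) ^ (k + 1).choose 2 :=
        pow_le_pow_left₀ (by linarith) (Real.one_sub_le_exp_neg p) _
    _ = Real.exp (-(((k + 1).choose 2 : ℕ) * p)) := by rw [← Real.exp_nat_mul]; ring_nf
    _ ≤ Real.exp (-(k ^ 2 * p / 2)) := by
        refine Real.exp_le_exp.mpr (neg_le_neg ?_)
        rw [Nat.cast_choose_two]
        push_cast
        nlinarith [mul_nonneg (Nat.cast_nonneg k : (0 : ℝ) ≤ k) hp0]

lemma tendsto_natCast_mul_exp_neg_rpow_div {β c : ℝ} (hβ : 0 < β) (hc : 0 < c) :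
    Tendsto (fun n : ℕ => (n : ℝ) * Real.exp (-(n : ℝ) ^ β / c)) atTop (nhds 0) := by
  have h := (tendsto_rpow_mul_exp_neg_mul_atTop_nhds_zero β⁻¹ c⁻¹ (inv_pos.mpr hc)).comp
    ((tendsto_rpow_atTop hβ).comp tendsto_natCast_atTop_atTop)
  refine h.congr fun n => ?_
  simp only [Function.comp_apply, Real.rpow_rpow_inv (Nat.cast_nonneg n) hβ.ne']
  ring_nf

lemma ite_exists_le_sum_ite {ι : Type*} [Fintype ι] (P : ι → Prop) [DecidablePred P]
    [Decidable (∃ i, P i)] :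
    (if ∃ i, P i then (1 : ℝ) else 0) ≤ ∑ i, if P i then 1 else 0 := by
  have hnonneg : ∀ i ∈ univ, (0 : ℝ) ≤ if P i then 1 else 0 := fun i _ => by
    split_ifs <;> norm_num
  split_ifs with h
  · obtain ⟨i, hi⟩ := h
    exact (single_le_sum hnonneg (mem_univ i)).trans' (by simp [hi])
  · exact sum_nonneg hnonneg

open scoped Classical

section GraphOf

variable {V : Type*}

abbrev Edge (V : Type*) := (⊤ : SimpleGraph V).edgeSet

def graphOf (ω : Edge V → Bool) : SimpleGraph V :=
  SimpleGraph.fromEdgeSet (Subtype.val '' {e | ω e})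

lemma mem_edgeSet_graphOf (ω : Edge V → Bool) (e : Edge V) :
    e.1 ∈ (graphOf ω).edgeSet ↔ ω e := by
  simp [graphOf, Subtype.val_injective.mem_set_image,
    SimpleGraph.not_isDiag_of_mem_edgeSet _ e.2]

lemma graphOf_adj (ω : Edge V → Bool) {e : Edge V} {x y : V} (he : e.1 = s(x, y)) :
    (graphOf ω).Adj x y ↔ ω e := by
  rw [← SimpleGraph.mem_edgeSet, ← he, mem_edgeSet_graphOf]

noncomputable def edgeIndicatorEquiv (V : Type*) : SimpleGraph V ≃ (Edge V → Bool) where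
  toFun G e := decide (e.1 ∈ G.edgeSet)
  invFun := graphOf
  left_inv G := by
    refine SimpleGraph.edgeSet_injective (Set.ext fun e => ?_)
    by_cases he : e.IsDiag
    · simp [he]
    · simpa using
        mem_edgeSet_graphOf (fun e => decide (e.1 ∈ G.edgeSet)) ⟨e, by simpa using he⟩
  right_inv ω := funext fun e => by simp [mem_edgeSet_graphOf]

lemma neighborFinset_graphOf_eq_iff [Fintype V] [DecidableEq V] (ω : Edge V → Bool) {v : V}
    {S : Finset V} (hv : v ∉ S) :
    (graphOf ω).neighborFinset v = S ↔
      ∀ e : Edge V, v ∈ e.1 → (ω e ↔ e.1 ∈ (insert v S).sym2) := by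
  constructor
  · rintro rfl e hve
    obtain ⟨u, hu⟩ := Sym2.mem_iff_exists.mp hve
    have huv : u ≠ v := by rintro rfl; simpa [hu] using e.2
    rw [← graphOf_adj ω hu, hu, mem_sym2_iff]
    simp [Sym2.mem_iff, huv]
  · intro h
    ext u
    by_cases huv : u = v
    · subst huv; simpa using hv
    · have := h ⟨s(v, u), by simpa using Ne.symm huv⟩ (Sym2.mem_mk_left v u)
      rw [← graphOf_adj ω rfl] at this
      simp [huv, this]

lemma isIndep_graphOf_iff (ω : Edge V → Bool) (S : Finset V) :
    (∀ x ∈ S, ∀ y ∈ S, ¬(graphOf ω).Adj x y) ↔ ∀ e : Edge V, e.1 ∈ S.sym2 → ¬ω e := by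
  constructor
  · rintro h ⟨e, he⟩ heS
    induction e using Sym2.ind with
    | _ x y =>
      rw [mem_sym2_iff] at heS
      rw [← graphOf_adj ω (e := ⟨s(x, y), he⟩) rfl]
      exact h x (heS x (Sym2.mem_mk_left x y)) y (heS y (Sym2.mem_mk_right x y))
  · intro h x hx y hy hxy
    exact h ⟨s(x, y), by simpa using hxy.ne⟩ (by simp [mem_sym2_iff, hx, hy])
      ((graphOf_adj ω rfl).mp hxy)

end GraphOf

section Counting

variable {V : Type*} [Fintype V] [DecidableEq V]

lemma prod_edge_ite_eq_pow (P : Sym2 V → Prop) [DecidablePred P] (c : ℝ) :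
    ∏ e : Edge V, (if P e.1 then c else 1)
      = c ^ #{e ∈ (⊤ : SimpleGraph V).edgeFinset | P e} := by
  rw [← prod_subtype _ (fun _ => SimpleGraph.mem_edgeFinset) (fun e => if P e then c else 1),
    prod_ite, prod_const, prod_const_one, mul_one]

lemma card_filter_top_edgeFinset_mem (v : V) :
    #{e ∈ (⊤ : SimpleGraph V).edgeFinset | v ∈ e} = Fintype.card V - 1 := by
  rw [← SimpleGraph.incidenceFinset_eq_filter, SimpleGraph.card_incidenceFinset_eq_degree,
    SimpleGraph.complete_graph_degree]

lemma card_filter_top_edgeFinset_mem_sym2 (S : Finset V) :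
    #{e ∈ (⊤ : SimpleGraph V).edgeFinset | e ∈ S.sym2} = (#S).choose 2 := by
  rw [← Sym2.card_image_offDiag, ← Sym2.filter_image_mk_not_isDiag, ← sym2_eq_image]
  congr 1
  ext e
  simp [and_comm]

lemma card_filter_top_edgeFinset_eq_degree (G : SimpleGraph V) (v : V) :
    #{e ∈ (⊤ : SimpleGraph V).edgeFinset | v ∈ e ∧ e ∈ G.edgeSet} = G.degree v := by
  rw [← SimpleGraph.card_incidenceFinset_eq_degree, SimpleGraph.incidenceFinset_eq_filter]
  congr 1
  ext e
  have := G.not_isDiag_of_mem_edgeSet (e := e)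
  simp only [mem_filter, SimpleGraph.edgeFinset_top, Set.mem_toFinset, Set.mem_compl_iff,
    Sym2.mem_diagSet, SimpleGraph.mem_edgeFinset]
  tauto

lemma card_filter_top_edgeFinset_eq_card_edgeFinset (G : SimpleGraph V) :
    #{e ∈ (⊤ : SimpleGraph V).edgeFinset | e ∈ G.edgeSet} = #G.edgeFinset := by
  congr 1
  ext e
  simpa using G.not_isDiag_of_mem_edgeSet

end Counting

section Expectations

variable {V : Type*} [Fintype V] [DecidableEq V] {p : ℝ}

lemma bernoulliWeight_eq_pow_card_edgeSet (ω : Edge V → Bool) :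
    bernoulliWeight p ω = p ^ Nat.card (graphOf ω).edgeSet
      * (1 - p) ^ ((Fintype.card V).choose 2 - Nat.card (graphOf ω).edgeSet) := by
  set G := graphOf ω
  have hsplit : ∀ e : Edge V, (if ω e then p else 1 - p)
      = (if e.1 ∈ G.edgeSet then p else 1) * (if e.1 ∉ G.edgeSet then 1 - p else 1) := by
    intro e
    by_cases h : ω e <;> simp [G, mem_edgeSet_graphOf, h]
  have hcard := card_filter_add_card_filter_not (s := (⊤ : SimpleGraph V).edgeFinset)
    (· ∈ G.edgeSet)
  rw [card_filter_top_edgeFinset_eq_card_edgeFinset,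
    SimpleGraph.card_edgeFinset_top_eq_card_choose_two] at hcard
  rw [bernoulliWeight, Fintype.prod_congr _ _ hsplit, prod_mul_distrib, prod_edge_ite_eq_pow,
    prod_edge_ite_eq_pow (· ∉ G.edgeSet), card_filter_top_edgeFinset_eq_card_edgeFinset,
    Nat.card_eq_fintype_card, ← SimpleGraph.edgeFinset_card]
  congr 2
  omega

lemma pow_degree_graphOf_eq_prod (ω : Edge V → Bool) (v : V) (c : ℝ) :
    c ^ (graphOf ω).degree v = ∏ e : Edge V, if v ∈ e.1 ∧ ω e then c else 1 := by
  rw [← card_filter_top_edgeFinset_eq_degree, ← prod_edge_ite_eq_pow]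
  simp [mem_edgeSet_graphOf]

theorem bernoulliExpect_pow_degree (v : V) (c : ℝ) :
    bernoulliExpect p (fun ω => c ^ (graphOf ω).degree v)
      = (p * c + (1 - p)) ^ (Fintype.card V - 1) := by
  rw [bernoulliExpect_eq_prod (fun e b => if v ∈ e.1 ∧ b then c else 1)
    (pow_degree_graphOf_eq_prod · v c), ← card_filter_top_edgeFinset_mem v,
    ← prod_edge_ite_eq_pow]
  refine Fintype.prod_congr _ _ fun e => ?_
  by_cases h : v ∈ e.1 <;> simp [h]

lemma bernoulliExpect_isIndep (S : Finset V) :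
    bernoulliExpect p (fun ω => if ∀ x ∈ S, ∀ y ∈ S, ¬(graphOf ω).Adj x y then 1 else 0)
      = (1 - p) ^ (#S).choose 2 := by
  rw [bernoulliExpect_eq_prod (fun e b => if e.1 ∈ S.sym2 → ¬b then 1 else 0)
    (fun ω => by rw [Fintype.prod_boole]; exact if_congr (isIndep_graphOf_iff ω S) rfl rfl),
    ← card_filter_top_edgeFinset_mem_sym2, ← prod_edge_ite_eq_pow]
  refine Fintype.prod_congr _ _ fun e => ?_
  by_cases h : e.1 ∈ S.sym2 <;> simp [h]

lemma bernoulliExpect_neighborFinset_eq_mul_isIndep {v : V} {S : Finset V} (hv : v ∉ S) :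
    bernoulliExpect p (fun ω => (if (graphOf ω).neighborFinset v = S then 1 else 0)
        * if ∀ x ∈ S, ∀ y ∈ S, ¬(graphOf ω).Adj x y then 1 else 0)
      = bernoulliExpect p (fun ω => if (graphOf ω).neighborFinset v = S then 1 else 0)
        * (1 - p) ^ (#S).choose 2 := by
  rw [bernoulliExpect_mul_of_prod_disjoint
    (fun e b => if v ∈ e.1 → (b ↔ e.1 ∈ (insert v S).sym2) then 1 else 0)
    (fun e b => if e.1 ∈ S.sym2 → ¬b then 1 else 0)
    (fun ω => by
      rw [Fintype.prod_boole]; exact if_congr (neighborFinset_graphOf_eq_iff ω hv) rfl rfl)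
    (fun ω => by rw [Fintype.prod_boole]; exact if_congr (isIndep_graphOf_iff ω S) rfl rfl),
    bernoulliExpect_isIndep]
  intro e
  by_cases h : v ∈ e.1
  · have hS : e.1 ∉ S.sym2 := fun hS => hv (mem_sym2_iff.mp hS v h)
    exact Or.inr (funext fun b => by simp [hS])
  · exact Or.inl (funext fun b => by simp [h])

lemma ite_indepNeighborhood_le (G : SimpleGraph V) (k : ℕ) (v : V) :
    (if ∀ x ∈ G.neighborSet v, ∀ y ∈ G.neighborSet v, ¬G.Adj x y then (1 : ℝ) else 0)
      ≤ 2 ^ k * (1 / 2) ^ G.degree v + ∑ S ∈ {S : Finset V | v ∉ S ∧ k < #S},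
          (if G.neighborFinset v = S then 1 else 0)
            * if ∀ x ∈ S, ∀ y ∈ S, ¬G.Adj x y then 1 else 0 := by
  have hterm : ∀ S : Finset V, (0 : ℝ) ≤ (if G.neighborFinset v = S then 1 else 0)
      * if ∀ x ∈ S, ∀ y ∈ S, ¬G.Adj x y then 1 else 0 := fun S =>
    mul_nonneg (by split_ifs <;> norm_num) (by split_ifs <;> norm_num)
  have hsum :=
    sum_nonneg (s := ({S : Finset V | v ∉ S ∧ k < #S} : Finset _)) fun S _ => hterm S
  split_ifs with hind
  · by_cases hk : G.degree v ≤ k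
    · have hmarkov : (1 : ℝ) ≤ 2 ^ k * (1 / 2) ^ G.degree v :=
        calc (1 : ℝ) = 2 ^ k * (1 / 2) ^ k := by rw [← mul_pow]; norm_num
          _ ≤ 2 ^ k * (1 / 2) ^ G.degree v :=
            mul_le_mul_of_nonneg_left (pow_le_pow_of_le_one (by norm_num) (by norm_num) hk)
              (by positivity)
      linarith
    · have hmem : G.neighborFinset v ∈ ({S : Finset V | v ∉ S ∧ k < #S} : Finset _) := by
        simp [G.card_neighborFinset_eq_degree, not_le.mp hk]
      refine le_add_of_nonneg_of_le (by positivity)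
        ((single_le_sum (fun S _ => hterm S) hmem).trans' ?_)
      simp_all
  · exact add_nonneg (by positivity) hsum

lemma sum_bernoulliExpect_neighborFinset_eq_mul_isIndep_le (hp0 : 0 ≤ p) (hp1 : p ≤ 1)
    (k : ℕ) (v : V) :
    ∑ S ∈ {S : Finset V | v ∉ S ∧ k < #S},
        bernoulliExpect p (fun ω => (if (graphOf ω).neighborFinset v = S then 1 else 0)
          * if ∀ x ∈ S, ∀ y ∈ S, ¬(graphOf ω).Adj x y then 1 else 0)
      ≤ (1 - p) ^ (k + 1).choose 2 := by
  set N : Finset V → ℝ :=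
    fun S => bernoulliExpect p (fun ω => if (graphOf ω).neighborFinset v = S then 1 else 0)
  have hN0 : ∀ S, 0 ≤ N S := fun S =>
    bernoulliExpect_nonneg hp0 hp1 fun ω => by split_ifs <;> norm_num
  have hN1 : ∑ S, N S = 1 := by
    rw [← bernoulliExpect_sum]
    simpa using bernoulliExpect_one (E := Edge V) p
  calc _ = ∑ S ∈ {S : Finset V | v ∉ S ∧ k < #S}, N S * (1 - p) ^ (#S).choose 2 :=
        sum_congr rfl fun S hS =>
          bernoulliExpect_neighborFinset_eq_mul_isIndep (mem_filter.mp hS).2.1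
    _ ≤ ∑ S ∈ {S : Finset V | v ∉ S ∧ k < #S}, N S * (1 - p) ^ (k + 1).choose 2 :=
        sum_le_sum fun S hS => mul_le_mul_of_nonneg_left (pow_le_pow_of_le_one (by linarith)
          (by linarith) (Nat.choose_le_choose 2 (mem_filter.mp hS).2.2)) (hN0 S)
    _ ≤ ∑ S, N S * (1 - p) ^ (k + 1).choose 2 :=
        sum_le_sum_of_subset_of_nonneg (subset_univ _) fun S _ _ =>
          mul_nonneg (hN0 S) (pow_nonneg (by linarith) _)
    _ = (1 - p) ^ (k + 1).choose 2 := by rw [← sum_mul, hN1, one_mul]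

theorem bernoulliExpect_indepNeighborhood_le (hp0 : 0 ≤ p) (hp1 : p ≤ 1) (k : ℕ) (v : V) :
    bernoulliExpect p (fun ω => if ∀ x ∈ (graphOf ω).neighborSet v,
        ∀ y ∈ (graphOf ω).neighborSet v, ¬(graphOf ω).Adj x y then 1 else 0)
      ≤ 2 ^ k * (1 - p / 2) ^ (Fintype.card V - 1) + (1 - p) ^ (k + 1).choose 2 := by
  have hhalf : p * (1 / 2) + (1 - p) = 1 - p / 2 := by ring
  refine (bernoulliExpect_mono hp0 hp1 fun ω => ite_indepNeighborhood_le _ k v).trans ?_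
  rw [bernoulliExpect_add, bernoulliExpect_const_mul, bernoulliExpect_pow_degree, hhalf,
    bernoulliExpect_sum]
  exact add_le_add le_rfl (sum_bernoulliExpect_neighborFinset_eq_mul_isIndep_le hp0 hp1 k v)

theorem bernoulliExpect_exists_indepNeighborhood_le (hp0 : 0 ≤ p) (hp1 : p ≤ 1) (k : ℕ) :
    bernoulliExpect p (fun ω => if ∃ v : V, ∀ x ∈ (graphOf ω).neighborSet v,
        ∀ y ∈ (graphOf ω).neighborSet v, ¬(graphOf ω).Adj x y then 1 else 0)
      ≤ Fintype.card V
        * (2 ^ k * (1 - p / 2) ^ (Fintype.card V - 1) + (1 - p) ^ (k + 1).choose 2) := by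
  calc _ ≤ bernoulliExpect p (fun ω => ∑ v, if ∀ x ∈ (graphOf ω).neighborSet v,
          ∀ y ∈ (graphOf ω).neighborSet v, ¬(graphOf ω).Adj x y then 1 else 0) :=
        bernoulliExpect_mono hp0 hp1 fun ω => ite_exists_le_sum_ite _
    _ = ∑ v, bernoulliExpect p (fun ω => if ∀ x ∈ (graphOf ω).neighborSet v,
          ∀ y ∈ (graphOf ω).neighborSet v, ¬(graphOf ω).Adj x y then 1 else 0) :=
        bernoulliExpect_sum _ _
    _ ≤ ∑ _v : V, (2 ^ k * (1 - p / 2) ^ (Fintype.card V - 1) + (1 - p) ^ (k + 1).choose 2) :=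
        sum_le_sum fun v _ => bernoulliExpect_indepNeighborhood_le hp0 hp1 k v
    _ = _ := by rw [sum_const, card_univ, nsmul_eq_mul]

end Expectations

lemma graphProb_eq_bernoulliExpect (n : ℕ) (p : ℝ) (A : SimpleGraph (Fin n) → Prop)
    [DecidablePred A] :
    graphProb n p A = bernoulliExpect p (fun ω => if A (graphOf ω) then 1 else 0) := by
  rw [graphProb, bernoulliExpect, ← (edgeIndicatorEquiv (Fin n)).symm.sum_comp]
  refine sum_congr rfl fun ω _ => ?_
  have hω : (edgeIndicatorEquiv (Fin n)).symm ω = graphOf ω := rfl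
  by_cases h : A (graphOf ω) <;> simp [hω, h, bernoulliWeight_eq_pow_card_edgeSet]

lemma graphProb_nonneg {n : ℕ} {p : ℝ} (hp0 : 0 ≤ p) (hp1 : p ≤ 1)
    (A : SimpleGraph (Fin n) → Prop) : 0 ≤ graphProb n p A :=
  sum_nonneg fun G _ => by
    split_ifs
    exacts [mul_nonneg (pow_nonneg hp0 _) (pow_nonneg (by linarith) _), le_rfl]

theorem graphProb_exists_indepNeighborhood_le {n : ℕ} (hn : 2 ≤ n) {p : ℝ} (hp0 : 0 ≤ p)
    (hp1 : p ≤ 1) (hnp : 16 ≤ n * p) :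
    graphProb n p
        (fun G => ∃ v : Fin n, ∀ x ∈ G.neighborSet v, ∀ y ∈ G.neighborSet v, ¬ G.Adj x y)
      ≤ n * Real.exp (-(n * p) / 8) + n * Real.exp (-(n ^ 2 * p ^ 3) / 512) := by
  set k := ⌊n * p / 8⌋₊
  have hk_le : (k : ℝ) ≤ n * p / 8 := Nat.floor_le (by positivity)
  have hk_ge : n * p / 16 ≤ k := by linarith [Nat.lt_floor_add_one (n * p / 8)]
  have hn1 : (n : ℝ) / 2 ≤ ((n - 1 : ℕ) : ℝ) := by
    have : (2 : ℝ) ≤ n := by exact_mod_cast hn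
    rw [Nat.cast_sub (by omega), Nat.cast_one]
    linarith
  have hlow : 2 ^ k * (1 - p / 2) ^ (n - 1) ≤ Real.exp (-(n * p) / 8) := by
    refine (two_pow_mul_one_sub_half_pow_le_exp (by linarith) k (n - 1)).trans
      (Real.exp_le_exp.mpr ?_)
    nlinarith
  have hhigh : (1 - p) ^ (k + 1).choose 2 ≤ Real.exp (-(n ^ 2 * p ^ 3) / 512) := by
    refine (one_sub_pow_choose_two_le_exp hp0 hp1 k).trans (Real.exp_le_exp.mpr ?_)
    have : (n * p / 16) ^ 2 ≤ (k : ℝ) ^ 2 := by gcongr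
    nlinarith
  have h := bernoulliExpect_exists_indepNeighborhood_le (V := Fin n) hp0 hp1 k
  rw [Fintype.card_fin] at h
  rw [graphProb_eq_bernoulliExpect]
  refine le_trans (le_of_eq ?_) (h.trans ?_)
  · congr!
  rw [← mul_add]
  gcongr

theorem graphProb_rpow_neg_le {α : ℝ} (hα : 0 ≤ α) {n : ℕ} (hn : 2 ≤ n)
    (h16 : 16 ≤ (n : ℝ) ^ (1 - α)) :
    graphProb n ((n : ℝ) ^ (-α))
        (fun G => ∃ v : Fin n, ∀ x ∈ G.neighborSet v, ∀ y ∈ G.neighborSet v, ¬ G.Adj x y)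
      ≤ n * Real.exp (-(n : ℝ) ^ (1 - α) / 8) + n * Real.exp (-(n : ℝ) ^ (2 - 3 * α) / 512) := by
  have hn0 : (0 : ℝ) < n := by positivity
  have hnp : (n : ℝ) * n ^ (-α) = n ^ (1 - α) := by
    rw [sub_eq_add_neg, Real.rpow_add hn0, Real.rpow_one]
  have hn2p3 : (n : ℝ) ^ 2 * (n ^ (-α)) ^ 3 = n ^ (2 - 3 * α) := by
    rw [← Real.rpow_natCast, ← Real.rpow_natCast, ← Real.rpow_mul hn0.le, ← Real.rpow_add hn0]
    ring_nf
  rw [← hnp, ← hn2p3]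
  have hn1 : (1 : ℝ) ≤ n := by exact_mod_cast (by omega : 1 ≤ n)
  exact graphProb_exists_indepNeighborhood_le hn (by positivity)
    (Real.rpow_le_one_of_one_le_of_nonpos hn1 (by linarith))
    (hnp ▸ h16)

end ErdosRenyi

/-- For `0 < α < 2/3` and `p = n^{-α}`, a.a.s. no vertex of `G(n,p)` has an
independent neighborhood. -/
theorem aas_no_independent_neighborhood (α : ℝ) (h0 : 0 < α) (h1 : α < 2 / 3) :
    Tendsto (fun n : ℕ => graphProb n ((n : ℝ) ^ (-α)) (fun G =>
        ∃ v : Fin n, ∀ x ∈ G.neighborSet v, ∀ y ∈ G.neighborSet v, ¬ G.Adj x y))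
      atTop (nhds 0) := by
  have hα1 : 0 < 1 - α := by linarith
  have hα2 : 0 < 2 - 3 * α := by linarith
  have hlim :=
    (ErdosRenyi.tendsto_natCast_mul_exp_neg_rpow_div hα1 (by norm_num : (0 : ℝ) < 8)).add
      (ErdosRenyi.tendsto_natCast_mul_exp_neg_rpow_div hα2 (by norm_num : (0 : ℝ) < 512))
  rw [add_zero] at hlim
  refine squeeze_zero' ?_ ?_ hlim
  · filter_upwards [eventually_ge_atTop 1] with n hn
    exact ErdosRenyi.graphProb_nonneg (by positivity)
      (Real.rpow_le_one_of_one_le_of_nonpos (by exact_mod_cast hn) (by linarith)) _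
  · filter_upwards [eventually_ge_atTop 2, ((tendsto_rpow_atTop hα1).comp
      tendsto_natCast_atTop_atTop).eventually_ge_atTop 16] with n hn h16
    exact ErdosRenyi.graphProb_rpow_neg_le h0.le hn h16
end
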